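/- Let Γ : Fin N → ℝ and let z : ℝ → Fin N → ℂ be a solution of the N-vortex equations: for every t ∈ ℝ the points z(t)₁, …, z(t)_N are pairwise distinct, and for every k and t the function s ↦ z(s)ₖ has derivative at t equal to −(1/(2πi))·∑_{l ≠ k} Γₗ / ( conj(z(t)ₖ) − conj(z(t)ₗ) ). Then the function t ↦ ∑_{k < l} Γₖ·Γₗ·log|z(t)ₖ − z(t)ₗ| is constant; in particular the Hamiltonian h is conserved along the vortex flow. -/

import Mathlib

/-!
Along the flow, d/dt log|z_k - z_l| = Re((ż_k - ż_l)/(z_k - z_l)). Splitting this as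
Re(ż_k/(z_k - z_l)) + Re(ż_l/(z_l - z_k)) and summing over the pairs k < l turns dH/dt into
∑_k Γ_k Re(ż_k · w_k) with w_k = ∑_{l ≠ k} Γ_l/(z_k - z_l). The vortex equations say ż_k is
the purely imaginary constant -1/(2πi) times conj(w_k), so each ż_k · w_k is purely imaginary.
-/

open Finset Complex

theorem HasDerivAt.log_norm {w : ℝ → ℂ} {w' : ℂ} {t : ℝ} (hw : HasDerivAt w w' t)
    (h0 : w t ≠ 0) : HasDerivAt (fun s => Real.log ‖w s‖) (w' / w t).re t := by
  have hlog := (hw.norm_sq.log (by positivity)).div_const 2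
  have hsq : (fun s => Real.log ‖w s‖) = fun s => Real.log (‖w s‖ ^ 2) / 2 := by
    funext s
    rw [Real.log_pow]
    ring
  rw [hsq]
  refine hlog.congr_deriv ?_
  rw [Complex.inner, Complex.div_re, ← Complex.normSq_eq_norm_sq]
  simp only [Complex.mul_re, Complex.conj_re, Complex.conj_im]
  field_simp
  ring

theorem Finset.sum_lt_add_swap {ι M : Type*} [Fintype ι] [LinearOrder ι] [AddCommMonoid M]
    (f : ι → ι → M) :
    ∑ p ∈ univ.filter (fun p : ι × ι => p.1 < p.2), (f p.1 p.2 + f p.2 p.1)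
      = ∑ k, ∑ l ∈ univ.erase k, f k l := by
  have hswap : ∑ p ∈ univ.filter (fun p : ι × ι => p.1 < p.2), f p.2 p.1
      = ∑ p ∈ univ.filter (fun p : ι × ι => p.2 < p.1), f p.1 p.2 :=
    sum_equiv (Equiv.prodComm ι ι) (by simp) (by simp)
  calc _ = ∑ p ∈ univ.filter (fun p : ι × ι => p.1 ≠ p.2), f p.1 p.2 := by
        rw [sum_add_distrib, hswap, ← sum_union (by grind [disjoint_left])]
        congr 1
        grind
    _ = ∑ k, ∑ l ∈ univ.erase k, f k l := by
        rw [sum_filter, Fintype.sum_prod_type]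
        refine sum_congr rfl fun k _ => ?_
        rw [← sum_filter, filter_ne]

section

variable {ι : Type*} [Fintype ι] [LinearOrder ι]

noncomputable def vortexVelocity (Γ : ι → ℝ) (ζ : ι → ℂ) (k : ι) : ℂ :=
  -(1 / (2 * (Real.pi : ℂ) * I)) *
    ∑ l ∈ univ.erase k, (Γ l : ℂ) / (starRingEnd ℂ (ζ k) - starRingEnd ℂ (ζ l))

theorem re_vortexVelocity_mul_sum_div_sub_eq_zero (Γ : ι → ℝ) (ζ : ι → ℂ) (k : ι) :
    (vortexVelocity Γ ζ k * ∑ l ∈ univ.erase k, (Γ l : ℂ) / (ζ k - ζ l)).re = 0 := by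
  set S := ∑ l ∈ univ.erase k, (Γ l : ℂ) / (starRingEnd ℂ (ζ k) - starRingEnd ℂ (ζ l))
  have hconj : ∑ l ∈ univ.erase k, (Γ l : ℂ) / (ζ k - ζ l) = starRingEnd ℂ S := by
    simp only [S, map_sum, map_div₀, map_sub, conj_conj, conj_ofReal]
  rw [hconj, vortexVelocity, mul_assoc, mul_conj, re_mul_ofReal]
  simp

theorem sum_pairs_re_vortexVelocity_div_eq_zero (Γ : ι → ℝ) (ζ : ι → ℂ) :
    ∑ p ∈ univ.filter (fun p : ι × ι => p.1 < p.2), Γ p.1 * Γ p.2 *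
      ((vortexVelocity Γ ζ p.1 - vortexVelocity Γ ζ p.2) / (ζ p.1 - ζ p.2)).re = 0 := by
  set V := vortexVelocity Γ ζ
  have hsplit : ∀ k l, Γ k * Γ l * ((V k - V l) / (ζ k - ζ l)).re
      = Γ k * Γ l * (V k / (ζ k - ζ l)).re + Γ l * Γ k * (V l / (ζ l - ζ k)).re := by
    intro k l
    rw [← neg_sub (ζ k), div_neg, neg_re, sub_div, sub_re]
    ring
  rw [sum_congr rfl fun p _ => hsplit p.1 p.2,
    sum_lt_add_swap fun k l => Γ k * Γ l * (V k / (ζ k - ζ l)).re]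
  refine sum_eq_zero fun k _ => ?_
  have hk := re_vortexVelocity_mul_sum_div_sub_eq_zero Γ ζ k
  rw [mul_sum, re_sum] at hk
  rw [← mul_zero (Γ k), ← hk, mul_sum]
  refine sum_congr rfl fun l _ => ?_
  rw [mul_div_left_comm, re_ofReal_mul, mul_assoc]

theorem hasDerivAt_sum_pairs_log_norm_sub (Γ : ι → ℝ) {z : ℝ → ι → ℂ} {z' : ι → ℂ} {t : ℝ}
    (hz : ∀ k, HasDerivAt (fun s => z s k) (z' k) t) (hdist : ∀ k l, k ≠ l → z t k ≠ z t l) :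
    HasDerivAt (fun s => ∑ p ∈ univ.filter (fun p : ι × ι => p.1 < p.2),
        Γ p.1 * Γ p.2 * Real.log ‖z s p.1 - z s p.2‖)
      (∑ p ∈ univ.filter (fun p : ι × ι => p.1 < p.2),
        Γ p.1 * Γ p.2 * ((z' p.1 - z' p.2) / (z t p.1 - z t p.2)).re) t :=
  HasDerivAt.fun_sum fun p hp =>
    (((hz p.1).sub (hz p.2)).log_norm
      (sub_ne_zero.mpr (hdist _ _ (mem_filter.mp hp).2.ne))).const_mul _

end

theorem statement14 (N : ℕ) (Γ : Fin N → ℝ) (z : ℝ → Fin N → ℂ)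
    (hdist : ∀ (t : ℝ) (k l : Fin N), k ≠ l → z t k ≠ z t l)
    (hode : ∀ (k : Fin N) (t : ℝ),
      HasDerivAt (fun s => z s k)
        (-(1 / (2 * (Real.pi : ℂ) * Complex.I)) *
          ∑ l ∈ Finset.univ.erase k,
            (Γ l : ℂ) / ((starRingEnd ℂ) (z t k) - (starRingEnd ℂ) (z t l))) t) :
    ∀ t s : ℝ,
      ∑ p ∈ Finset.univ.filter (fun p : Fin N × Fin N => p.1 < p.2),
          Γ p.1 * Γ p.2 * Real.log (‖z t p.1 - z t p.2‖)
        = ∑ p ∈ Finset.univ.filter (fun p : Fin N × Fin N => p.1 < p.2),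
            Γ p.1 * Γ p.2 * Real.log (‖z s p.1 - z s p.2‖) := by
  have hconst : ∀ t, HasDerivAt (fun s => ∑ p ∈ univ.filter (fun p : Fin N × Fin N => p.1 < p.2),
      Γ p.1 * Γ p.2 * Real.log ‖z s p.1 - z s p.2‖) 0 t := fun t => by
    simpa only [sum_pairs_re_vortexVelocity_div_eq_zero] using
      hasDerivAt_sum_pairs_log_norm_sub Γ (z' := vortexVelocity Γ (z t)) (hode · t) (hdist t)
  exact is_const_of_deriv_eq_zero (fun t => (hconst t).differentiableAt)
    fun t => (hconst t).deriv
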